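/- For the tripartite state |ψ*> = (1/(2√2))(|000>+|001>+|010>+|100>-|011>-|101>-|110>-|111>) with A0_i = σ_z and A1_i = -σ_x: the four Hardy zero conditions hold, namely the probability of outcomes (+1,+1,+1) vanishes under each of the measurement settings (A1,A0,A0), (A0,A1,A0), (A0,A0,A1), and the probability of outcomes (-1,-1,-1) vanishes under setting (A1,A1,A1). -/

import Mathlib

/-!
Each projector is rank one, `P = |u⟩⟨v|`, and Kronecker products of rank-one matrices are rank one,
so each projected state is `⟨v|ψ*⟩ • u`. The four overlaps are `ψ*(000) - ψ*(100)`,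
`ψ*(000) - ψ*(010)`, `ψ*(000) - ψ*(001)` and the sum of all amplitudes of `ψ*`; they vanish because
`ψ*` has equal amplitudes on `000` and its single flips, and four amplitudes of each sign.
-/

open Kronecker Matrix

/-- The Hardy-optimal state
`|ψ*⟩ = (1/(2√2))(|000⟩+|001⟩+|010⟩+|100⟩-|011⟩-|101⟩-|110⟩-|111⟩)`. -/
noncomputable def psiStar : ((Fin 2 × Fin 2) × Fin 2) → ℂ :=
  fun p =>
    (if p = ((0, 1), 1) ∨ p = ((1, 0), 1) ∨ p = ((1, 1), 0) ∨ p = ((1, 1), 1)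
      then (-1 : ℂ) else 1) / ((2 * Real.sqrt 2 : ℝ) : ℂ)

/-- Projector onto the `+1` outcome of `σ_z`, i.e. `|0⟩⟨0|`. -/
def projZplus : Matrix (Fin 2) (Fin 2) ℂ := !![1, 0; 0, 0]

/-- Projector onto the `+1` outcome of `-σ_x`, i.e. `|−⟩⟨−|`. -/
noncomputable def projMinus : Matrix (Fin 2) (Fin 2) ℂ := !![1/2, -(1/2); -(1/2), 1/2]

/-- Projector onto the `-1` outcome of `-σ_x`, i.e. `|+⟩⟨+|`. -/
noncomputable def projPlus : Matrix (Fin 2) (Fin 2) ℂ := !![1/2, 1/2; 1/2, 1/2]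

namespace Matrix

variable {α l m n p : Type*}

theorem kroneckerMap_vecMulVec [CommSemigroup α] (a : l → α) (b : m → α) (c : n → α) (d : p → α) :
    vecMulVec a b ⊗ₖ vecMulVec c d =
      vecMulVec (fun i : l × n => a i.1 * c i.2) (fun j : m × p => b j.1 * d j.2) := by
  ext i j
  simp only [kroneckerMap_apply, vecMulVec_apply]
  ac_rfl

theorem sum_norm_sq_vecMulVec_mulVec_eq_zero [NonUnitalNormedRing α] [Fintype l] [Fintype m]
    (u : l → α) {v w : m → α} (h : v ⬝ᵥ w = 0) : ∑ i, ‖(vecMulVec u v *ᵥ w) i‖ ^ 2 = 0 := by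
  simp [vecMulVec_mulVec, h]

end Matrix

theorem projZplus_eq_vecMulVec : projZplus = vecMulVec ![1, 0] ![1, 0] := by
  ext i j; fin_cases i <;> fin_cases j <;> simp [projZplus, vecMulVec_apply]

theorem projMinus_eq_vecMulVec : projMinus = vecMulVec ![1 / 2, -(1 / 2)] ![1, -1] := by
  ext i j; fin_cases i <;> fin_cases j <;> simp [projMinus, vecMulVec_apply]

theorem projPlus_eq_vecMulVec : projPlus = vecMulVec (fun _ ↦ 1 / 2) 1 := by
  ext i j; fin_cases i <;> fin_cases j <;> simp [projPlus, vecMulVec_apply]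

theorem psiStar_100_eq_000 : psiStar ((1, 0), 0) = psiStar ((0, 0), 0) := by simp [psiStar]

theorem psiStar_010_eq_000 : psiStar ((0, 1), 0) = psiStar ((0, 0), 0) := by simp [psiStar]

theorem psiStar_001_eq_000 : psiStar ((0, 0), 1) = psiStar ((0, 0), 0) := by simp [psiStar]

theorem sum_psiStar : ∑ p, psiStar p = 0 := by
  simp only [psiStar, Fintype.sum_prod_type, Fin.sum_univ_two]
  norm_num
  ring

/-- The four Hardy zero conditions hold for `|ψ*⟩` with `A0 = σ_z` and `A1 = -σ_x`:
the probability of outcomes `(+1,+1,+1)` vanishes under settings `(A1,A0,A0)`,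
`(A0,A1,A0)`, `(A0,A0,A1)`, and the probability of outcomes `(-1,-1,-1)` vanishes
under `(A1,A1,A1)`. Each probability is the squared norm of the projected state. -/
theorem psiStar_hardy_zero_conditions :
    (∑ p, ‖((projMinus ⊗ₖ projZplus ⊗ₖ projZplus).mulVec psiStar) p‖ ^ 2 = 0) ∧
    (∑ p, ‖((projZplus ⊗ₖ projMinus ⊗ₖ projZplus).mulVec psiStar) p‖ ^ 2 = 0) ∧
    (∑ p, ‖((projZplus ⊗ₖ projZplus ⊗ₖ projMinus).mulVec psiStar) p‖ ^ 2 = 0) ∧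
    (∑ p, ‖((projPlus ⊗ₖ projPlus ⊗ₖ projPlus).mulVec psiStar) p‖ ^ 2 = 0) := by
  simp only [projZplus_eq_vecMulVec, projMinus_eq_vecMulVec, projPlus_eq_vecMulVec,
    kroneckerMap_vecMulVec]
  refine ⟨sum_norm_sq_vecMulVec_mulVec_eq_zero _ ?_, sum_norm_sq_vecMulVec_mulVec_eq_zero _ ?_,
    sum_norm_sq_vecMulVec_mulVec_eq_zero _ ?_, sum_norm_sq_vecMulVec_mulVec_eq_zero _ ?_⟩
  · simp [dotProduct, Fintype.sum_prod_type, psiStar_100_eq_000]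
  · simp [dotProduct, Fintype.sum_prod_type, psiStar_010_eq_000]
  · simp [dotProduct, Fintype.sum_prod_type, psiStar_001_eq_000]
  · simp only [Pi.one_apply, mul_one]
    exact (one_dotProduct psiStar).trans sum_psiStar
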